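/- Let n, m be natural numbers with m < n, let U ∈ ℂ^{n×m} satisfy U*U = I_m, and let S⋆ be a selection operator that maximizes |det(SᵀU)| over all selection operators S (such a maximizer exists since there are finitely many selections). Then S⋆ᵀU is invertible and ‖(S⋆ᵀU)⁻¹‖₂ ≤ √(1 + m(n − m)). -/

import Mathlib

open Matrix

/-- Spectral norm: operator norm induced by the Euclidean vector norm. -/
noncomputable def specNorm {𝕜 : Type*} [RCLike 𝕜] {a b : ℕ} (A : Matrix (Fin a) (Fin b) 𝕜) : ℝ :=
  ‖LinearMap.toContinuousLinearMap (Matrix.toEuclideanLin A)‖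

/-- Euclidean norm of a vector. -/
noncomputable def evNorm {𝕜 : Type*} [RCLike 𝕜] {a : ℕ} (f : Fin a → 𝕜) : ℝ :=
  Real.sqrt (∑ i, ‖f i‖ ^ 2)

/-- A selection operator: its columns are `m` distinct columns of the identity matrix. -/
def IsSelection {𝕜 : Type*} [RCLike 𝕜] {n m : ℕ} (S : Matrix (Fin n) (Fin m) 𝕜) : Prop :=
  ∃ p : Fin m → Fin n, Function.Injective p ∧
    S = Matrix.of fun j i => if j = p i then 1 else 0

/-!
Write `A = S⋆ᵀU = U.submatrix p id` for the rows `p` picked by `S⋆`. Some `m` rows of `U` are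
linearly independent, so maximality forces `det A ≠ 0`. By Cramer's rule each entry of
`B = U A⁻¹` is a ratio `det (U.submatrix q id) / det A`, where `q` replaces one row of `A` by a
row of `U`; maximality gives `‖B i j‖ ≤ 1`. As `U` is an isometry, `‖A⁻¹ x‖ = ‖B x‖`. The rows
`p` of `B` form the identity and, by Cauchy–Schwarz, each of the other `n - m` rows contributes at
most `m ‖x‖²`, whence `‖A⁻¹ x‖² ≤ (1 + m (n - m)) ‖x‖²`.
-/

section RCLike

variable {𝕜 ι κ : Type*} [RCLike 𝕜] [Fintype κ]

lemma star_dotProduct_self_eq_sum_norm_sq [Fintype ι] (v : ι → 𝕜) :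
    star v ⬝ᵥ v = ((∑ i, ‖v i‖ ^ 2 : ℝ) : 𝕜) := by
  push_cast
  simp [dotProduct, RCLike.conj_mul]

lemma sum_norm_sq_mulVec_of_conjTranspose_mul_self_eq_one [Fintype ι] [DecidableEq κ]
    {U : Matrix ι κ 𝕜} (hU : Uᴴ * U = 1) (y : κ → 𝕜) : ∑ i, ‖(U *ᵥ y) i‖ ^ 2 = ∑ j, ‖y j‖ ^ 2 := by
  have h : star (U *ᵥ y) ⬝ᵥ (U *ᵥ y) = star y ⬝ᵥ y := by
    rw [star_mulVec, dotProduct_mulVec, vecMul_vecMul, hU, vecMul_one]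
  rw [star_dotProduct_self_eq_sum_norm_sq, star_dotProduct_self_eq_sum_norm_sq] at h
  exact_mod_cast h

lemma norm_sq_mulVec_apply_le {B : Matrix ι κ 𝕜} {i : ι} (hB : ∀ j, ‖B i j‖ ≤ 1) (x : κ → 𝕜) :
    ‖(B *ᵥ x) i‖ ^ 2 ≤ Fintype.card κ * ∑ j, ‖x j‖ ^ 2 := by
  have hle : ‖(B *ᵥ x) i‖ ≤ ∑ j, ‖x j‖ :=
    calc ‖∑ j, B i j * x j‖ ≤ ∑ j, ‖B i j * x j‖ := norm_sum_le _ _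
      _ ≤ ∑ j, ‖x j‖ := Finset.sum_le_sum fun j _ => by
          rw [norm_mul]; exact mul_le_of_le_one_left (norm_nonneg _) (hB j)
  calc ‖(B *ᵥ x) i‖ ^ 2 ≤ (∑ j, ‖x j‖) ^ 2 := by gcongr
    _ ≤ Fintype.card κ * ∑ j, ‖x j‖ ^ 2 := sq_sum_le_card_mul_sum_sq

lemma sum_norm_sq_mulVec_le [Fintype ι] [DecidableEq κ] {B : Matrix ι κ 𝕜} {p : κ → ι}
    (hp : p.Injective) (hBp : B.submatrix p id = 1) (hB : ∀ i j, ‖B i j‖ ≤ 1) (x : κ → 𝕜) :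
    ∑ i, ‖(B *ᵥ x) i‖ ^ 2 ≤
      (1 + Fintype.card κ * ((Fintype.card ι : ℝ) - Fintype.card κ)) * ∑ j, ‖x j‖ ^ 2 := by
  classical
  set s := Finset.univ.map ⟨p, hp⟩
  have hsel : ∑ i ∈ s, ‖(B *ᵥ x) i‖ ^ 2 = ∑ j, ‖x j‖ ^ 2 := by
    rw [Finset.sum_map]
    refine Finset.sum_congr rfl fun k _ => ?_
    have : (B *ᵥ x) (p k) = x k := by
      change (B.submatrix p id *ᵥ x) k = x k
      rw [hBp, one_mulVec]
    simp [this]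
  have hcard : (sᶜ.card : ℝ) = Fintype.card ι - Fintype.card κ := by
    rw [Finset.card_compl, Finset.card_map, Finset.card_univ,
      Nat.cast_sub (Fintype.card_le_of_injective p hp)]
  have hrest : ∑ i ∈ sᶜ, ‖(B *ᵥ x) i‖ ^ 2 ≤ sᶜ.card * (Fintype.card κ * ∑ j, ‖x j‖ ^ 2) := by
    simpa using Finset.sum_le_card_nsmul sᶜ _ _ fun i _ => norm_sq_mulVec_apply_le (hB i) x
  rw [← Finset.sum_add_sum_compl s, hsel, ← hcard]
  linarith

end RCLike

section Minors

variable {R K ι κ : Type*} [DecidableEq κ]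

lemma vecMul_inv_apply_eq_det_updateRow_div [Field K] [Fintype κ] (A : Matrix κ κ K) (v : κ → K)
    (j : κ) :
    (v ᵥ* A⁻¹) j = (A.updateRow j v).det / A.det := by
  by_cases hA : A.det = 0
  · simp [hA, Matrix.inv_def]
  · rw [eq_div_iff hA, mul_comm, ← smul_eq_mul, ← Pi.smul_apply,
      det_smul_inv_vecMul_eq_cramer_transpose A v (isUnit_iff_ne_zero.2 hA),
      cramer_transpose_apply]

lemma updateRow_submatrix_id [DecidableEq ι] (M : Matrix ι κ R) (p : κ → ι) (j : κ) (i : ι) :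
    (M.submatrix p id).updateRow j (M i) = M.submatrix (Function.update p j i) id := by
  ext k l
  rcases eq_or_ne k j with rfl | hkj <;> simp [updateRow_apply, *]

lemma det_submatrix_id_eq_zero_of_not_injective [CommRing R] [Fintype κ] (M : Matrix ι κ R)
    {q : κ → ι} (hq : ¬q.Injective) : (M.submatrix q id).det = 0 := by
  obtain ⟨a, b, hab, hne⟩ : ∃ a b, q a = q b ∧ a ≠ b := by
    simpa [Function.Injective] using hq
  exact det_zero_of_row_eq hne (by ext l; simp [hab])

lemma exists_injective_det_submatrix_id_ne_zero [Field K] [Fintype ι] [Fintype κ]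
    (U : Matrix ι κ K) {V : Matrix κ ι K} (hVU : V * U = 1) :
    ∃ p : κ → ι, p.Injective ∧ (U.submatrix p id).det ≠ 0 := by
  have hspan : Submodule.span K (Set.range U.row) = ⊤ := by
    rw [← range_vecMulLinear, LinearMap.range_eq_top]
    exact vecMul_surjective_iff_exists_left_inverse.2 ⟨V, hVU⟩
  obtain ⟨ν, a, ha, hspan', hli⟩ := exists_linearIndependent' K U.row
  rw [hspan] at hspan'
  let b := Module.Basis.mk hli hspan'.ge
  have : Fintype ν := Fintype.ofInjective a ha
  let e : κ ≃ ν := Fintype.equivOfCardEq <| by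
    rw [← Module.finrank_eq_card_basis b, Module.finrank_fintype_fun_eq_card]
  refine ⟨a ∘ e, ha.comp e.injective, ?_⟩
  rw [← isUnit_iff_ne_zero, ← isUnit_iff_isUnit_det, ← linearIndependent_rows_iff_isUnit]
  exact hli.comp e e.injective

end Minors

lemma norm_mul_inv_submatrix_apply_le_one {K ι κ : Type*} [NormedField K] [Fintype κ]
    [DecidableEq ι] [DecidableEq κ] {U : Matrix ι κ K} {p : κ → ι}
    (hvol : ∀ q : κ → ι, ‖(U.submatrix q id).det‖ ≤ ‖(U.submatrix p id).det‖) (i : ι) (j : κ) :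
    ‖(U * (U.submatrix p id)⁻¹) i j‖ ≤ 1 := by
  rw [mul_apply_eq_vecMul, vecMul_inv_apply_eq_det_updateRow_div, updateRow_submatrix_id,
    norm_div]
  exact div_le_one_of_le₀ (hvol _) (norm_nonneg _)

lemma transpose_selection_mul {R ι κ ν : Type*} [Semiring R] [Fintype ι] [DecidableEq ι]
    (p : κ → ι) (M : Matrix ι ν R) :
    (Matrix.of fun j i => if j = p i then (1 : R) else 0)ᵀ * M = M.submatrix p id := by
  ext k l
  simp [mul_apply]

lemma norm_det_submatrix_le_of_isSelection_le {𝕜 : Type*} [RCLike 𝕜] {n m : ℕ}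
    {U : Matrix (Fin n) (Fin m) 𝕜} {A : Matrix (Fin m) (Fin m) 𝕜}
    (hmax : ∀ S : Matrix (Fin n) (Fin m) 𝕜, IsSelection S → ‖(Sᵀ * U).det‖ ≤ ‖A.det‖)
    (q : Fin m → Fin n) : ‖(U.submatrix q id).det‖ ≤ ‖A.det‖ := by
  by_cases hq : q.Injective
  · simpa [transpose_selection_mul] using hmax _ ⟨q, hq, rfl⟩
  · simp [det_submatrix_id_eq_zero_of_not_injective U hq]

lemma specNorm_le_sqrt_of_sum_norm_sq_le {𝕜 : Type*} [RCLike 𝕜] {a b : ℕ}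
    {M : Matrix (Fin a) (Fin b) 𝕜} {C : ℝ} (hC : 0 ≤ C)
    (h : ∀ x : Fin b → 𝕜, ∑ i, ‖(M *ᵥ x) i‖ ^ 2 ≤ C * ∑ j, ‖x j‖ ^ 2) :
    specNorm M ≤ √C := by
  refine ContinuousLinearMap.opNorm_le_bound _ (Real.sqrt_nonneg C) fun x => ?_
  rw [LinearMap.coe_toContinuousLinearMap', EuclideanSpace.norm_eq, EuclideanSpace.norm_eq,
    ← Real.sqrt_mul hC]
  exact Real.sqrt_le_sqrt (h x)

theorem volume_maximizing_selection_bound_general {n m : ℕ}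
    (U : Matrix (Fin n) (Fin m) ℂ) (hU : Uᴴ * U = 1)
    (Sstar : Matrix (Fin n) (Fin m) ℂ) (hSstar : IsSelection Sstar)
    (hmax : ∀ S : Matrix (Fin n) (Fin m) ℂ, IsSelection S →
      ‖(Sᵀ * U).det‖ ≤ ‖(Sstarᵀ * U).det‖) :
    IsUnit (Sstarᵀ * U) ∧
      specNorm (Sstarᵀ * U)⁻¹ ≤ Real.sqrt (1 + m * ((n : ℝ) - m)) := by
  obtain ⟨p, hp, rfl⟩ := hSstar
  rw [transpose_selection_mul] at hmax ⊢
  set A := U.submatrix p id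
  have hvol := norm_det_submatrix_le_of_isSelection_le hmax
  have hA : IsUnit A := by
    obtain ⟨q, -, hq⟩ := exists_injective_det_submatrix_id_ne_zero U hU
    rw [isUnit_iff_isUnit_det, isUnit_iff_ne_zero, ← norm_pos_iff]
    exact (norm_pos_iff.2 hq).trans_le (hvol q)
  have hB : (U * A⁻¹).submatrix p id = 1 := mul_nonsing_inv A (isUnit_iff_isUnit_det A |>.1 hA)
  have hmn : (m : ℝ) ≤ n := by exact_mod_cast Fin.le_of_injective p hp
  refine ⟨hA, specNorm_le_sqrt_of_sum_norm_sq_le (by nlinarith) fun x => ?_⟩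
  calc ∑ k, ‖(A⁻¹ *ᵥ x) k‖ ^ 2 = ∑ i, ‖((U * A⁻¹) *ᵥ x) i‖ ^ 2 := by
        rw [← mulVec_mulVec, sum_norm_sq_mulVec_of_conjTranspose_mul_self_eq_one hU]
    _ ≤ (1 + m * ((n : ℝ) - m)) * ∑ j, ‖x j‖ ^ 2 := by
        simpa using sum_norm_sq_mulVec_le hp hB (norm_mul_inv_submatrix_apply_le_one hvol) x

/-- A volume-maximizing selection operator `S⋆` satisfies
`‖(S⋆ᵀU)⁻¹‖₂ ≤ √(1+m(n−m))`. -/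
theorem volume_maximizing_selection_bound {n m : ℕ} (hmn : m < n)
    (U : Matrix (Fin n) (Fin m) ℂ) (hU : Uᴴ * U = 1)
    (Sstar : Matrix (Fin n) (Fin m) ℂ) (hSstar : IsSelection Sstar)
    (hmax : ∀ S : Matrix (Fin n) (Fin m) ℂ, IsSelection S →
      ‖(Sᵀ * U).det‖ ≤ ‖(Sstarᵀ * U).det‖) :
    IsUnit (Sstarᵀ * U) ∧
      specNorm (Sstarᵀ * U)⁻¹ ≤ Real.sqrt (1 + m * ((n : ℝ) - m)) :=
  volume_maximizing_selection_bound_general U hU Sstar hSstar hmax
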